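/- arXiv:2206.09876 — 5 statements merged into one kernel-verified Lean document; each statement's English description precedes it below -/
import Mathlib

section
/- For all integers $k \ge 2$ and even integers $b$ with $2 \le b \le 2k$, the inequality $\binom{2k}{b} \ge (2k+1-b)\binom{k}{b/2}$ holds. -/
/-!
Write `b = 2 (i + 1)`. Pascal's ratio `C(2k, b) · b = C(2k, b - 1) · (2k + 1 - b)` reduces the claim to
`b · C(k, i + 1) ≤ C(2k, 2i + 1)`. By Vandermonde, `C(2k, 2i + 1)` contains the two terms
`C(k, i) C(k, i + 1)` and `C(k, i + 1) C(k, i)`, and `C(k, i) ≥ C(i + 1, i) = i + 1` when `i < k`.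
-/

theorem Nat.choose_mul_choose_succ_add_le (m n i : ℕ) :
    m.choose i * n.choose (i + 1) + m.choose (i + 1) * n.choose i ≤
      (m + n).choose (2 * i + 1) := by
  rw [Nat.add_choose_eq]
  refine Finset.add_le_sum (f := fun ij : ℕ × ℕ => m.choose ij.1 * n.choose ij.2)
    (i := (i, i + 1)) (j := (i + 1, i)) (fun _ _ => Nat.zero_le _) ?_ ?_ (by simp) <;>
  · rw [Finset.HasAntidiagonal.mem_antidiagonal]; omega

theorem Nat.succ_le_choose_of_lt {i k : ℕ} (h : i < k) : i + 1 ≤ k.choose i :=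
  (Nat.choose_succ_self_right i).ge.trans (Nat.choose_le_choose i h)

theorem Nat.two_mul_succ_mul_choose_succ_le (k i : ℕ) :
    2 * (i + 1) * k.choose (i + 1) ≤ (2 * k).choose (2 * i + 1) := by
  rcases lt_or_ge i k with h | h
  · calc 2 * (i + 1) * k.choose (i + 1)
        ≤ 2 * (k.choose i * k.choose (i + 1)) := by
          rw [mul_assoc]; gcongr; exact Nat.succ_le_choose_of_lt h
      _ = k.choose i * k.choose (i + 1) + k.choose (i + 1) * k.choose i := by ring
      _ ≤ (2 * k).choose (2 * i + 1) := two_mul k ▸ Nat.choose_mul_choose_succ_add_le k k i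
  · simp [Nat.choose_eq_zero_of_lt (Nat.lt_succ_of_le h)]

theorem Nat.sub_mul_choose_le_choose_two_mul (k i : ℕ) :
    (2 * k - (2 * i + 1)) * k.choose (i + 1) ≤ (2 * k).choose (2 * (i + 1)) := by
  refine Nat.le_of_mul_le_mul_left ?_ (by positivity : 0 < 2 * (i + 1))
  calc 2 * (i + 1) * ((2 * k - (2 * i + 1)) * k.choose (i + 1))
      = (2 * k - (2 * i + 1)) * (2 * (i + 1) * k.choose (i + 1)) := by ring
    _ ≤ (2 * k - (2 * i + 1)) * (2 * k).choose (2 * i + 1) := by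
        gcongr; exact Nat.two_mul_succ_mul_choose_succ_le k i
    _ = 2 * (i + 1) * (2 * k).choose (2 * (i + 1)) := by
        rw [mul_comm, ← Nat.choose_succ_right_eq]; ring_nf

theorem choose_ineq_general (k b : ℕ) (hb : Even b) (hb2 : 2 ≤ b) :
    (2 * k + 1 - b) * Nat.choose k (b / 2) ≤ Nat.choose (2 * k) b := by
  obtain ⟨i, rfl⟩ : ∃ i, b = 2 * (i + 1) := by
    obtain ⟨j, rfl⟩ := hb
    exact ⟨j - 1, by omega⟩
  rw [show 2 * k + 1 - 2 * (i + 1) = 2 * k - (2 * i + 1) by omega,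
    Nat.mul_div_cancel_left _ two_pos]
  exact Nat.sub_mul_choose_le_choose_two_mul k i

theorem choose_ineq (k b : ℕ) (hk : 2 ≤ k) (hb : Even b) (hb2 : 2 ≤ b) (hble : b ≤ 2 * k) :
    (2 * k + 1 - b) * Nat.choose k (b / 2) ≤ Nat.choose (2 * k) b :=
  choose_ineq_general k b hb hb2
end

section
/- Fix $r > 0$ and positive integers $d$ and $m \ge 2r$. Embed $\mathbb{Z}_m$ in $\mathbb{Z}$ using coset representatives $x$ with $-m/2 < x \le m/2$, and let $|x|$ denote the Euclidean norm of the representative of $x \in \mathbb{Z}_m^d$. Suppose $g: \mathbb{Z}^d \to \mathbb{R}$ satisfies $g(x) \le 0$ for all $x \in \mathbb{Z}^d$ with $|x| \ge r$, and $g \in L^1(\mathbb{Z}^d)$. Define $g_m(x) = \sum_{n \in m\mathbb{Z}^d} g(x+n)$. Then $g_m(x) \le 0$ for all $x \in \mathbb{Z}_m^d$ with $|x| \ge r$, and $g_m(0) \le g(0)$. -/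
open scoped BigOperators

/-- The coset representative of `a : ℤ/mℤ` lying in the interval `(-m/2, m/2]`. -/
def srep (m : ℕ) [NeZero m] (a : ZMod m) : ℤ :=
  if 2 * a.val ≤ m then (a.val : ℤ) else (a.val : ℤ) - m

/-- Euclidean norm of an integer vector. -/
noncomputable def enormZ (d : ℕ) (x : Fin d → ℤ) : ℝ :=
  Real.sqrt (∑ i, ((x i : ℝ)) ^ 2)

/-- Periodization of `g : ℤ^d → ℝ` to `ℤ_m^d`, using representatives in `(-m/2, m/2]`. -/
noncomputable def periodize (m d : ℕ) [NeZero m] (g : (Fin d → ℤ) → ℝ)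
    (x : Fin d → ZMod m) : ℝ :=
  ∑' n : Fin d → ℤ, g (fun i => srep m (x i) + m * n i)

/-! Each translate `x + m n` of a representative `x ∈ (-m/2, m/2]^d` is at least as long as `x`,
and a nonzero lattice vector `m n` has length at least `m ≥ 2r`.  So every term of the periodized
sum at a point of norm `≥ r` is nonpositive, and at `0` every term but `g 0` is. -/

theorem tsum_le_of_nonpos_of_ne {ι α : Type*} [AddCommMonoid α] [PartialOrder α]
    [IsOrderedAddMonoid α] [TopologicalSpace α] [OrderClosedTopology α] [DecidableEq ι]
    {f : ι → α} (hf : Summable f) (a : ι) (h : ∀ i, i ≠ a → f i ≤ 0) :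
    ∑' i, f i ≤ f a := by
  calc ∑' i, f i ≤ ∑' i, if i = a then f a else 0 :=
        hf.tsum_le_tsum (fun i => by split_ifs with hi; exacts [hi ▸ le_rfl, h i hi])
          (hasSum_ite_eq a (f a)).summable
    _ = f a := tsum_ite_eq a fun _ => f a

section Representatives

variable (m : ℕ) [NeZero m]

theorem two_mul_abs_srep_le (a : ZMod m) : 2 * |srep m a| ≤ m := by
  have hv : a.val < m := ZMod.val_lt a
  unfold srep
  split_ifs
  · rw [abs_of_nonneg (Int.natCast_nonneg _)]; omega
  · rw [abs_of_nonpos (by omega)]; omega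

@[simp]
theorem srep_zero : srep m 0 = 0 := by
  simp [srep]

end Representatives

theorem abs_le_abs_add_mul {s c : ℤ} (hs : 2 * |s| ≤ c) (k : ℤ) : |s| ≤ |s + c * k| := by
  rcases eq_or_ne k 0 with rfl | hk
  · simp
  · have hc : c ≤ |c * k| := by
      rw [abs_mul, abs_of_nonneg (by linarith [abs_nonneg s])]
      nlinarith [Int.one_le_abs hk, abs_nonneg s]
    have := abs_sub_abs_le_abs_sub (c * k) (-s)
    rw [sub_neg_eq_add, add_comm] at this
    linarith [abs_neg s]

section EuclideanNorm

variable {d : ℕ}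

theorem enormZ_le_enormZ {x y : Fin d → ℤ} (h : ∀ i, |x i| ≤ |y i|) : enormZ d x ≤ enormZ d y := by
  refine Real.sqrt_le_sqrt (Finset.sum_le_sum fun i _ => ?_)
  rw [← sq_abs (x i : ℝ), ← sq_abs (y i : ℝ)]
  exact pow_le_pow_left₀ (abs_nonneg _) (by exact_mod_cast h i) 2

theorem abs_le_enormZ (x : Fin d → ℤ) (i : Fin d) : |(x i : ℝ)| ≤ enormZ d x := by
  rw [← Real.sqrt_sq_eq_abs]
  exact Real.sqrt_le_sqrt <|
    Finset.single_le_sum (fun j _ => sq_nonneg (x j : ℝ)) (Finset.mem_univ i)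

theorem enormZ_srep_le (m : ℕ) [NeZero m] (x : Fin d → ZMod m) (n : Fin d → ℤ) :
    enormZ d (fun i => srep m (x i)) ≤ enormZ d (fun i => srep m (x i) + m * n i) :=
  enormZ_le_enormZ fun i => abs_le_abs_add_mul (two_mul_abs_srep_le m (x i)) (n i)

theorem le_enormZ_mul_of_ne_zero (m : ℕ) {n : Fin d → ℤ} (hn : n ≠ 0) :
    (m : ℝ) ≤ enormZ d (fun i => m * n i) := by
  obtain ⟨i, hi⟩ := Function.ne_iff.mp hn
  have hle : (m : ℤ) ≤ |m * n i| := by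
    rw [abs_mul, Nat.abs_cast]
    exact le_mul_of_one_le_right (Int.natCast_nonneg m) (Int.one_le_abs hi)
  calc (m : ℝ) ≤ |((m * n i : ℤ) : ℝ)| := by rw [← Int.cast_abs]; exact_mod_cast hle
    _ ≤ _ := abs_le_enormZ (fun i => m * n i) i

end EuclideanNorm

theorem summable_periodize_zero (m d : ℕ) [NeZero m] {g : (Fin d → ℤ) → ℝ} (hg : Summable g) :
    Summable fun n : Fin d → ℤ => g (fun i => m * n i) := by
  refine hg.comp_injective fun a b hab => funext fun i => ?_
  exact mul_left_cancel₀ (Int.natCast_ne_zero.mpr (NeZero.ne m)) (congrFun hab i)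

theorem periodize_nonpos_outside_and_le_at_zero_general (m d : ℕ) [NeZero m] (r : ℝ) (hr : 0 < r)
    (hm : 2 * r ≤ (m : ℝ)) (g : (Fin d → ℤ) → ℝ)
    (hg : Summable fun x => |g x|)
    (hneg : ∀ x : Fin d → ℤ, r ≤ enormZ d x → g x ≤ 0) :
    (∀ x : Fin d → ZMod m, r ≤ enormZ d (fun i => srep m (x i)) → periodize m d g x ≤ 0) ∧
    periodize m d g 0 ≤ g 0 := by
  refine ⟨fun x hx => tsum_nonpos fun n => hneg _ (hx.trans (enormZ_srep_le m x n)), ?_⟩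
  have hperiodize : periodize m d g 0 = ∑' n : Fin d → ℤ, g (fun i => m * n i) := by
    simp [periodize]
  have hterm : ∀ n : Fin d → ℤ, n ≠ 0 → g (fun i => m * n i) ≤ 0 := fun n hn =>
    hneg _ (by linarith [le_enormZ_mul_of_ne_zero (d := d) m hn])
  calc periodize m d g 0 = ∑' n : Fin d → ℤ, g (fun i => m * n i) := hperiodize
    _ ≤ g (fun i => m * (0 : Fin d → ℤ) i) :=
        tsum_le_of_nonpos_of_ne (summable_periodize_zero m d hg.of_abs) 0 hterm
    _ = g 0 := by simp only [Pi.zero_apply, mul_zero]; rfl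

theorem periodize_nonpos_outside_and_le_at_zero (m d : ℕ) [NeZero m] (r : ℝ) (hr : 0 < r)
    (hd : 0 < d) (hm : 2 * r ≤ (m : ℝ)) (g : (Fin d → ℤ) → ℝ)
    (hg : Summable fun x => |g x|)
    (hneg : ∀ x : Fin d → ℤ, r ≤ enormZ d x → g x ≤ 0) :
    (∀ x : Fin d → ZMod m, r ≤ enormZ d (fun i => srep m (x i)) → periodize m d g x ≤ 0) ∧
    periodize m d g 0 ≤ g 0 :=
  periodize_nonpos_outside_and_le_at_zero_general m d r hr hm g hg hneg
end

section
/- Fix $r > 0$, positive integers $m, d$. Suppose $\mu, \lambda: \mathbb{Z}_m^d \to \mathbb{R}$ are even, $\lambda = \widehat\mu$, $\lambda(y) \ge 0$ for all $y$, $\mu(x) \ge 0$ for all $|x| \ge r$, $\mu(x) = 0$ for $0 < |x| < r$, and $\mu(0) = (r/2)^d$. Then every even function $f: \mathbb{Z}_m^d \to \mathbb{R}$ with $\widehat f(0) \ge m^{-d/2}$, $f(x) \le 0$ for $|x| \ge r$, and $\widehat f(y) \ge 0$ for all $y$, satisfies $(r/2)^d f(0) \ge m^{-d/2} \lambda(0)$.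 -/
/-!
By Parseval, `∑ y, λ(y) f̂(y) = ∑ x, μ(x) f(x)` (as `f` is real and even). Every term on the left
is nonnegative, so the sum is at least `λ(0) f̂(0) ≥ m^(-d/2) λ(0)`. Every term on the right with
`x ≠ 0` is nonpositive, since `μ` vanishes on `0 < |x| < r` while `μ ≥ 0 ≥ f` on `|x| ≥ r`, so the
sum is at most `μ(0) f(0) = (r/2)^d f(0)`.
-/

open scoped BigOperators

/-- Discrete Fourier transform on `ℤ_m^d`, normalized by `m^(-d/2)`. -/
noncomputable def dft (m d : ℕ) [NeZero m] (f : (Fin d → ZMod m) → ℂ)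
    (y : Fin d → ZMod m) : ℂ :=
  ((Real.sqrt (m ^ d) : ℝ) : ℂ)⁻¹ *
    ∑ x : Fin d → ZMod m, f x *
      Complex.exp (-(2 * Real.pi * Complex.I * (∑ i, ((x i).val : ℂ) * ((y i).val : ℂ)) / m))

/-- Euclidean norm of an element of `ℤ_m^d`, via representatives in `(-m/2, m/2]`. -/
noncomputable def znorm (m d : ℕ) [NeZero m] (x : Fin d → ZMod m) : ℝ :=
  Real.sqrt (∑ i, ((srep m (x i) : ℝ)) ^ 2)

open Finset

theorem AddChar.map_sum_eq_prod {ι A M : Type*} [AddCommMonoid A] [CommMonoid M]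
    (ψ : AddChar A M) (s : Finset ι) (v : ι → A) :
    ψ (∑ i ∈ s, v i) = ∏ i ∈ s, ψ (v i) :=
  map_prod ψ.toMonoidHom (fun i => Multiplicative.ofAdd (v i)) s

section
variable {m d : ℕ} [NeZero m]

theorem sum_stdAddChar_dotProduct (a : Fin d → ZMod m) :
    ∑ y : Fin d → ZMod m, ZMod.stdAddChar (a ⬝ᵥ y) = if a = 0 then (m : ℂ) ^ d else 0 := by
  have hfactor : ∀ y : Fin d → ZMod m,
      ZMod.stdAddChar (a ⬝ᵥ y) = ∏ i, ZMod.stdAddChar (y i * a i) := fun y => by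
    simp_rw [dotProduct, mul_comm (a _)]
    exact AddChar.map_sum_eq_prod _ _ _
  simp_rw [hfactor]
  rw [← Fintype.prod_sum fun i (c : ZMod m) => ZMod.stdAddChar (c * a i)]
  simp_rw [AddChar.sum_mulShift _ (ZMod.isPrimitive_stdAddChar m), apply_ite (Nat.cast : ℕ → ℂ),
    Nat.cast_zero, Fintype.prod_ite_zero, ZMod.card]
  simp [funext_iff]

theorem exp_dft_exponent_eq_stdAddChar (x y : Fin d → ZMod m) :
    Complex.exp (-(2 * Real.pi * Complex.I * (∑ i, ((x i).val : ℂ) * ((y i).val : ℂ)) / m)) =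
      ZMod.stdAddChar (-(x ⬝ᵥ y)) := by
  have hcast : ((-(∑ i, (x i).val * (y i).val : ℕ) : ℤ) : ZMod m) = -(x ⬝ᵥ y) := by
    push_cast
    simp only [ZMod.natCast_val, ZMod.cast_id, dotProduct]
  rw [← hcast, ZMod.stdAddChar_coe]
  push_cast
  ring_nf

theorem dft_eq_sum_stdAddChar (g : (Fin d → ZMod m) → ℂ) (y : Fin d → ZMod m) :
    dft m d g y =
      ((Real.sqrt (m ^ d) : ℝ) : ℂ)⁻¹ * ∑ x, g x * ZMod.stdAddChar (-(x ⬝ᵥ y)) := by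
  simp_rw [dft, exp_dft_exponent_eq_stdAddChar]

theorem sum_stdAddChar_neg_dotProduct_mul (x z : Fin d → ZMod m) :
    ∑ y : Fin d → ZMod m, ZMod.stdAddChar (-(x ⬝ᵥ y)) * ZMod.stdAddChar (-(z ⬝ᵥ y)) =
      if z = -x then (m : ℂ) ^ d else 0 := by
  simp_rw [← AddChar.map_add_eq_mul, ← neg_add, ← add_dotProduct, ← neg_dotProduct,
    sum_stdAddChar_dotProduct, neg_eq_zero, add_eq_zero_iff_eq_neg']

theorem sum_dft_mul_dft (g h : (Fin d → ZMod m) → ℂ) :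
    ∑ y, dft m d g y * dft m d h y = ∑ x, g x * h (-x) := by
  simp_rw [dft_eq_sum_stdAddChar]
  set c : ℂ := ((Real.sqrt (m ^ d) : ℝ) : ℂ)⁻¹ with hc_def
  have hc : c * c * (m : ℂ) ^ d = 1 := by
    rw [hc_def, ← mul_inv, ← Complex.ofReal_mul, Real.mul_self_sqrt (by positivity)]
    push_cast
    exact inv_mul_cancel₀ (pow_ne_zero _ (Nat.cast_ne_zero.2 (NeZero.ne m)))
  calc _ = c * c * ∑ x, ∑ z, g x * h z *
          ∑ y, ZMod.stdAddChar (-(x ⬝ᵥ y)) * ZMod.stdAddChar (-(z ⬝ᵥ y)) := by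
        simp_rw [mul_mul_mul_comm, sum_mul_sum, mul_sum]
        rw [sum_comm]
        refine sum_congr rfl fun x _ => ?_
        rw [sum_comm]
        exact sum_congr rfl fun z _ => sum_congr rfl fun y _ => by ring
    _ = c * c * (m : ℂ) ^ d * ∑ x, g x * h (-x) := by
        simp_rw [sum_stdAddChar_neg_dotProduct_mul, mul_ite, mul_zero, sum_ite_eq', mem_univ,
          if_true, mul_sum]
        exact sum_congr rfl fun x _ => by ring
    _ = ∑ x, g x * h (-x) := by rw [hc, one_mul]

theorem srep_eq_zero_iff {a : ZMod m} : srep m a = 0 ↔ a = 0 := by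
  have hlt := ZMod.val_lt a
  rw [srep, ← ZMod.val_eq_zero]
  split_ifs <;> omega

theorem znorm_pos {x : Fin d → ZMod m} (hx : x ≠ 0) : 0 < znorm m d x := by
  obtain ⟨i, hi⟩ := Function.ne_iff.1 hx
  have hsrep : (srep m (x i) : ℝ) ≠ 0 := Int.cast_ne_zero.2 (srep_eq_zero_iff.not.2 hi)
  exact Real.sqrt_pos.2 <|
    sum_pos' (fun j _ => sq_nonneg _) ⟨i, mem_univ i, by positivity⟩

theorem sum_mul_le_apply_zero_mul {r : ℝ} (μ f : (Fin d → ZMod m) → ℝ)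
    (hμ_nonneg : ∀ x, r ≤ znorm m d x → 0 ≤ μ x)
    (hμ_zero : ∀ x, 0 < znorm m d x → znorm m d x < r → μ x = 0)
    (hf : ∀ x, r ≤ znorm m d x → f x ≤ 0) :
    ∑ x, μ x * f x ≤ μ 0 * f 0 := by
  rw [← add_sum_erase _ _ (mem_univ 0)]
  refine add_le_of_nonpos_right <| sum_nonpos fun x hx => ?_
  have hx0 := znorm_pos (ne_of_mem_erase hx)
  rcases lt_or_ge (znorm m d x) r with hlt | hge
  · rw [hμ_zero x hx0 hlt, zero_mul]
  · exact mul_nonpos_of_nonneg_of_nonpos (hμ_nonneg x hge) (hf x hge)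

end

theorem discrete_weak_duality_general (m d : ℕ) [NeZero m] (r : ℝ)
    (μ lam : (Fin d → ZMod m) → ℝ)
    (hlam : ∀ y, (lam y : ℂ) = dft m d (fun x => (μ x : ℂ)) y)
    (hlam_nonneg : ∀ y, 0 ≤ lam y)
    (hμ_nonneg : ∀ x, r ≤ znorm m d x → 0 ≤ μ x)
    (hμ_zero : ∀ x, 0 < znorm m d x → znorm m d x < r → μ x = 0)
    (hμ0 : μ 0 = (r / 2) ^ d) :
    ∀ f : (Fin d → ZMod m) → ℝ, (∀ x, f (-x) = f x) →
      (Real.sqrt ((m : ℝ) ^ d))⁻¹ ≤ (dft m d (fun x => (f x : ℂ)) 0).re →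
      (∀ x, r ≤ znorm m d x → f x ≤ 0) →
      (∀ y, 0 ≤ (dft m d (fun x => (f x : ℂ)) y).re) →
      (Real.sqrt ((m : ℝ) ^ d))⁻¹ * lam 0 ≤ (r / 2) ^ d * f 0 := by
  intro f hf_even hf0 hf_nonpos hf_hat
  set F := dft m d (fun x => (f x : ℂ))
  have hparseval : ∑ y, lam y * (F y).re = ∑ x, μ x * f x := by
    have h := congrArg Complex.re (sum_dft_mul_dft (fun x => (μ x : ℂ)) fun x => (f x : ℂ))
    simpa only [← hlam, Complex.re_sum, Complex.re_ofReal_mul, hf_even, Complex.ofReal_re]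
      using h
  calc (Real.sqrt ((m : ℝ) ^ d))⁻¹ * lam 0
      ≤ lam 0 * (F 0).re := by rw [mul_comm]; exact mul_le_mul_of_nonneg_left hf0 (hlam_nonneg 0)
    _ ≤ ∑ y, lam y * (F y).re :=
        single_le_sum (f := fun y => lam y * (F y).re)
          (fun y _ => mul_nonneg (hlam_nonneg y) (hf_hat y)) (mem_univ 0)
    _ = ∑ x, μ x * f x := hparseval
    _ ≤ μ 0 * f 0 := sum_mul_le_apply_zero_mul μ f hμ_nonneg hμ_zero hf_nonpos
    _ = (r / 2) ^ d * f 0 := by rw [hμ0]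

theorem discrete_weak_duality (m d : ℕ) [NeZero m] (hd : 0 < d) (r : ℝ) (hr : 0 < r)
    (μ lam : (Fin d → ZMod m) → ℝ)
    (hμeven : ∀ x, μ (-x) = μ x) (hlameven : ∀ y, lam (-y) = lam y)
    (hlam : ∀ y, (lam y : ℂ) = dft m d (fun x => (μ x : ℂ)) y)
    (hlam_nonneg : ∀ y, 0 ≤ lam y)
    (hμ_nonneg : ∀ x, r ≤ znorm m d x → 0 ≤ μ x)
    (hμ_zero : ∀ x, 0 < znorm m d x → znorm m d x < r → μ x = 0)
    (hμ0 : μ 0 = (r / 2) ^ d) :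
    ∀ f : (Fin d → ZMod m) → ℝ, (∀ x, f (-x) = f x) →
      (Real.sqrt ((m : ℝ) ^ d))⁻¹ ≤ (dft m d (fun x => (f x : ℂ)) 0).re →
      (∀ x, r ≤ znorm m d x → f x ≤ 0) →
      (∀ y, 0 ≤ (dft m d (fun x => (f x : ℂ)) y).re) →
      (Real.sqrt ((m : ℝ) ^ d))⁻¹ * lam 0 ≤ (r / 2) ^ d * f 0 :=
  discrete_weak_duality_general m d r μ lam hlam hlam_nonneg hμ_nonneg hμ_zero hμ0
end

section
/- For every integer $k \ge 2$ and even integer $b$ with $0 \le b \le 2k+1$ and integers $a, c \ge 0$ with $a + b + c = 2k+1$, the quantity $\binom{2k+1}{b} + k(-1)^{b/2}\binom{k}{b/2} + (k+1)\frac{a-c}{a+c}(-1)^{b/2}\binom{k}{b/2}$ is nonnegative (interpreting the middle fraction as any value in $[-1,1]$ when convenient; in particular it suffices that $\binom{2k+1}{b} + k(-1)^{b/2}\binom{k}{b/2} \ge (k+1)\binom{k}{b/2}$). -/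
/-! Write `q = (a - c)/(a + c) ∈ [-1, 1]`. For `b = 2j ≥ 2` the two signed terms together are
at most `(2k+1)·C(k,j)` in absolute value, and `(2k+1)·C(k,j) ≤ C(2k+1,2j)`: by
`(2k+1)·C(2k,2j-1) = 2j·C(2k+1,2j)` this reduces to `2j·C(k,j) ≤ C(2k,2j-1)`, which follows
from the two Vandermonde terms `C(k,j)·C(k,j-1)` and `C(k,j-1)·C(k,j)` together with
`j ≤ C(k,j-1)`. For `b = 0` the quantity is `1 + k + (k+1)q ≥ 0`. -/

namespace Nat

open Finset in
theorem choose_mul_add_choose_mul_le_choose_add {i l : ℕ} (hil : i ≠ l) (m n : ℕ) :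
    m.choose i * n.choose l + m.choose l * n.choose i ≤ (m + n).choose (i + l) := by
  have hpair : ({(i, l), (l, i)} : Finset (ℕ × ℕ)) ⊆ antidiagonal (i + l) := by
    intro x hx
    simp only [mem_insert, mem_singleton] at hx
    rcases hx with rfl | rfl <;> simp [add_comm]
  calc m.choose i * n.choose l + m.choose l * n.choose i
      = ∑ p ∈ ({(i, l), (l, i)} : Finset (ℕ × ℕ)), m.choose p.1 * n.choose p.2 := by
        rw [sum_pair (by simp [hil])]
    _ ≤ ∑ p ∈ antidiagonal (i + l), m.choose p.1 * n.choose p.2 :=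
        sum_le_sum_of_subset hpair
    _ = (m + n).choose (i + l) := (add_choose_eq m n _).symm

theorem two_mul_choose_le_choose_two_mul {i k : ℕ} (hik : i < k) :
    2 * (i + 1) * k.choose (i + 1) ≤ (2 * k).choose (2 * i + 1) := by
  have hi : i + 1 ≤ k.choose i :=
    (choose_succ_self_right i).symm.le.trans (choose_le_choose i hik)
  calc 2 * (i + 1) * k.choose (i + 1)
      ≤ 2 * k.choose i * k.choose (i + 1) := by gcongr
    _ = k.choose (i + 1) * k.choose i + k.choose i * k.choose (i + 1) := by ring
    _ ≤ (k + k).choose (i + 1 + i) := choose_mul_add_choose_mul_le_choose_add (by omega) k k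
    _ = (2 * k).choose (2 * i + 1) := by rw [← two_mul, add_right_comm, ← two_mul]

theorem two_mul_add_one_mul_choose_le {i k : ℕ} (hik : i < k) :
    (2 * k + 1) * k.choose (i + 1) ≤ (2 * k + 1).choose (2 * (i + 1)) := by
  refine le_of_mul_le_mul_right (a := 2 * (i + 1)) ?_ (by omega)
  calc (2 * k + 1) * k.choose (i + 1) * (2 * (i + 1))
      = (2 * k + 1) * (2 * (i + 1) * k.choose (i + 1)) := by ring
    _ ≤ (2 * k + 1) * (2 * k).choose (2 * i + 1) :=
      Nat.mul_le_mul_left _ (two_mul_choose_le_choose_two_mul hik)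
    _ = (2 * k + 1).choose (2 * (i + 1)) * (2 * (i + 1)) := by
      rw [add_one_mul_choose_eq]; ring_nf

end Nat

theorem abs_sub_div_add_le_one {α : Type*} [Field α] [LinearOrder α] [IsStrictOrderedRing α]
    {a c : α} (ha : 0 ≤ a) (hc : 0 ≤ c) : |(a - c) / (a + c)| ≤ 1 := by
  rw [abs_div, abs_of_nonneg (add_nonneg ha hc)]
  exact div_le_one_of_le₀ (abs_sub_le_iff.2 ⟨by linarith, by linarith⟩) (add_nonneg ha hc)

theorem add_mul_mul_add_mul_mul_nonneg {α : Type*} [Field α] [LinearOrder α]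
    [IsStrictOrderedRing α] {N C k q s : α} (hk : 0 ≤ k) (hC : 0 ≤ C) (hq : |q| ≤ 1)
    (hs : |s| ≤ 1) (hN : (2 * k + 1) * C ≤ N) :
    0 ≤ N + k * s * C + (k + 1) * q * s * C := by
  have hsC : |s * C| ≤ C := by
    rw [abs_mul, abs_of_nonneg hC]; exact mul_le_of_le_one_left hC hs
  have hqsC : |q * (s * C)| ≤ C := by
    rw [abs_mul]; exact (mul_le_of_le_one_left (abs_nonneg _) hq).trans hsC
  nlinarith [neg_abs_le (s * C), neg_abs_le (q * (s * C))]

theorem dual_nonneg_quantity_general (k a b c : ℕ) (hb : Even b)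
    (hsum : a + b + c = 2 * k + 1) :
    0 ≤ (Nat.choose (2 * k + 1) b : ℚ)
        + (k : ℚ) * (-1) ^ (b / 2) * (Nat.choose k (b / 2) : ℚ)
        + ((k : ℚ) + 1) * (((a : ℚ) - (c : ℚ)) / ((a : ℚ) + (c : ℚ)))
            * (-1) ^ (b / 2) * (Nat.choose k (b / 2) : ℚ) := by
  obtain ⟨j, rfl⟩ := hb
  have hq := abs_sub_div_add_le_one (a.cast_nonneg (α := ℚ)) (c.cast_nonneg (α := ℚ))
  rw [show (j + j) / 2 = j by omega]
  rcases j with _ | i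
  · simp only [Nat.add_zero, Nat.choose_zero_right, pow_zero, Nat.cast_one, mul_one]
    nlinarith [neg_abs_le (((a : ℚ) - c) / (a + c))]
  · refine add_mul_mul_add_mul_mul_nonneg k.cast_nonneg (Nat.cast_nonneg _) hq
      (abs_neg_one_pow _).le ?_
    rw [← two_mul]
    exact_mod_cast Nat.two_mul_add_one_mul_choose_le (by omega : i < k)

theorem dual_nonneg_quantity (k a b c : ℕ) (hk : 2 ≤ k) (hb : Even b)
    (hsum : a + b + c = 2 * k + 1) :
    0 ≤ (Nat.choose (2 * k + 1) b : ℚ)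
        + (k : ℚ) * (-1) ^ (b / 2) * (Nat.choose k (b / 2) : ℚ)
        + ((k : ℚ) + 1) * (((a : ℚ) - (c : ℚ)) / ((a : ℚ) + (c : ℚ)))
            * (-1) ^ (b / 2) * (Nat.choose k (b / 2) : ℚ) :=
  dual_nonneg_quantity_general k a b c hb hsum
end

section
/- For every integer $k \ge 2$ and even integer $b$ with $2 \le b \le 2k$, one has $\binom{2k+1}{b} \ge (2k+1)\binom{k}{b/2}$. -/
/-!
With `f j = (2k+1).choose (2j) / k.choose j`, the identity `odd_mul_choose_add_two_mul_choose`
says `f (j+1) / f j = (2k+1-2j) / (2j+1)`. So `f` increases while `2j ≤ k` and decreases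
afterwards, and `f 1 = f k = 2k+1` bounds it from below on `1 ≤ j ≤ k`.
-/

theorem odd_mul_choose_add_two_mul_choose (k j : ℕ) :
    (2 * j + 1) * (2 * k + 1).choose (2 * j + 2) * k.choose j =
      (2 * k + 1 - 2 * j) * (2 * k + 1).choose (2 * j) * k.choose (j + 1) := by
  obtain ⟨m, rfl⟩ | hkj := (le_or_gt j k).imp_left Nat.exists_eq_add_of_le
  · have h₁ := Nat.choose_succ_right_eq (j + m) j
    have h₂ := Nat.choose_succ_right_eq (2 * (j + m) + 1) (2 * j)
    have h₃ := Nat.choose_succ_right_eq (2 * (j + m) + 1) (2 * j + 1)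
    rw [show j + m - j = m by omega] at h₁
    rw [show 2 * (j + m) + 1 - 2 * j = 2 * m + 1 by omega] at h₂ ⊢
    rw [show 2 * (j + m) + 1 - (2 * j + 1) = 2 * m by omega] at h₃
    refine Nat.eq_of_mul_eq_mul_right (show 0 < 2 * (j + 1) by positivity) ?_
    linear_combination (2 * j + 1) * (j + m).choose j * h₃ + 2 * m * (j + m).choose j * h₂
      - 2 * (2 * m + 1) * (2 * (j + m) + 1).choose (2 * j) * h₁
  · simp [Nat.choose_eq_zero_of_lt hkj, Nat.choose_eq_zero_of_lt (hkj.trans j.lt_succ_self)]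

section

variable {k j : ℕ}

theorem mul_choose_succ_le_of_two_mul_le (hj : 2 * j ≤ k)
    (h : (2 * k + 1) * k.choose j ≤ (2 * k + 1).choose (2 * j)) :
    (2 * k + 1) * k.choose (j + 1) ≤ (2 * k + 1).choose (2 * j + 2) := by
  have hpos : 0 < (2 * j + 1) * k.choose j :=
    Nat.mul_pos (2 * j).succ_pos (Nat.choose_pos (by omega))
  refine Nat.le_of_mul_le_mul_left ?_ hpos
  calc (2 * j + 1) * k.choose j * ((2 * k + 1) * k.choose (j + 1))
      = (2 * j + 1) * ((2 * k + 1) * k.choose j) * k.choose (j + 1) := by ring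
    _ ≤ (2 * k + 1 - 2 * j) * (2 * k + 1).choose (2 * j) * k.choose (j + 1) := by
      gcongr; omega
    _ = (2 * j + 1) * k.choose j * (2 * k + 1).choose (2 * j + 2) := by
      linear_combination (odd_mul_choose_add_two_mul_choose k j).symm

theorem mul_choose_le_of_succ_of_le_two_mul (hj : k ≤ 2 * j) (hjk : j < k)
    (h : (2 * k + 1) * k.choose (j + 1) ≤ (2 * k + 1).choose (2 * j + 2)) :
    (2 * k + 1) * k.choose j ≤ (2 * k + 1).choose (2 * j) := by
  have hpos : 0 < (2 * k + 1 - 2 * j) * k.choose (j + 1) :=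
    Nat.mul_pos (by omega) (Nat.choose_pos hjk)
  refine Nat.le_of_mul_le_mul_left ?_ hpos
  calc (2 * k + 1 - 2 * j) * k.choose (j + 1) * ((2 * k + 1) * k.choose j)
      = k.choose j * ((2 * k + 1 - 2 * j) * ((2 * k + 1) * k.choose (j + 1))) := by ring
    _ ≤ k.choose j * ((2 * j + 1) * (2 * k + 1).choose (2 * j + 2)) := by gcongr; omega
    _ = (2 * k + 1 - 2 * j) * k.choose (j + 1) * (2 * k + 1).choose (2 * j) := by
      linear_combination odd_mul_choose_add_two_mul_choose k j

theorem mul_choose_le_choose_of_two_mul_le (hj : 1 ≤ j) (hjk : 2 * j ≤ k) :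
    (2 * k + 1) * k.choose j ≤ (2 * k + 1).choose (2 * j) := by
  induction j, hj using Nat.le_induction with
  | base =>
    rw [Nat.choose_one_right, Nat.choose_two_right, Nat.le_div_iff_mul_le two_pos,
      Nat.add_sub_cancel]
    exact le_of_eq (by ring)
  | succ j _ ih => exact mul_choose_succ_le_of_two_mul_le (by omega) (ih (by omega))

theorem mul_choose_le_choose_of_le_two_mul (hj : k ≤ 2 * j) (hjk : j ≤ k) :
    (2 * k + 1) * k.choose j ≤ (2 * k + 1).choose (2 * j) := by
  induction hjk using Nat.decreasingInduction with
  | self => simp [Nat.choose_succ_self_right]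
  | of_succ j hjk ih => exact mul_choose_le_of_succ_of_le_two_mul hj hjk (ih (by omega))

end

theorem choose_succ_ineq_general (k b : ℕ) (hb : Even b) (hb2 : 2 ≤ b)
    (hble : b ≤ 2 * k) :
    (2 * k + 1) * Nat.choose k (b / 2) ≤ Nat.choose (2 * k + 1) b := by
  obtain ⟨j, rfl⟩ := hb
  rw [← two_mul, Nat.mul_div_cancel_left j two_pos]
  rcases le_total (2 * j) k with hjk | hjk
  · exact mul_choose_le_choose_of_two_mul_le (by omega) hjk
  · exact mul_choose_le_choose_of_le_two_mul hjk (by omega)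

theorem choose_succ_ineq (k b : ℕ) (hk : 2 ≤ k) (hb : Even b) (hb2 : 2 ≤ b)
    (hble : b ≤ 2 * k) :
    (2 * k + 1) * Nat.choose k (b / 2) ≤ Nat.choose (2 * k + 1) b :=
  choose_succ_ineq_general k b hb hb2 hble
end
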